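/- Let Ω₀ ⊆ ℂ² be open and connected, and let T₀ be a nonempty open subset of ℝ² (the real points (s,t) of ℂ²) with T₀ ⊆ Ω₀ ∩ ℝ². Let (gⱼ) be a sequence of holomorphic functions on Ω₀, uniformly bounded by M, such that gⱼ → 0 pointwise on T₀. Then some subsequence of (gⱼ) converges locally uniformly on Ω₀ to the zero function, and moreover every locally uniform subsequential limit of (gⱼ) is identically zero. -/

import Mathlib

open Complex Filter

open Metric Set Topology

/-- Schwarz-lemma based local Lipschitz estimate for bounded holomorphic functions on a domain
in `ℂ × ℂ`. -/
lemma holo_lipschitz {Ω : Set (ℂ × ℂ)} {f : ℂ × ℂ → ℂ} (hf : DifferentiableOn ℂ f Ω)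
    {M : ℝ} (hM : ∀ z ∈ Ω, ‖f z‖ ≤ M) {z₀ : ℂ × ℂ} {r : ℝ} (hr : 0 < r)
    (hball : ball z₀ (2 * r) ⊆ Ω) {z w : ℂ × ℂ} (hz : z ∈ ball z₀ (r / 2))
    (hw : w ∈ ball z₀ (r / 2)) :
    dist (f w) (f z) ≤ (2 * M + 1) / r * dist w z := by
  have hzΩ : z ∈ Ω := hball (mem_ball.mpr (lt_of_lt_of_le (mem_ball.mp hz) (by linarith)))
  have hM0 : 0 ≤ M := le_trans (norm_nonneg _) (hM z hzΩ)
  rcases eq_or_ne w z with rfl | hne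
  · simp [div_nonneg, hM0, hr.le]
  have hu : (0:ℝ) < ‖w - z‖ := by rwa [norm_pos_iff, sub_ne_zero]
  set R : ℝ := r / ‖w - z‖ with hR
  have hRpos : 0 < R := div_pos hr hu
  set φ : ℂ → ℂ := fun l => f (z + l • (w - z)) with hφ
  have hmapsdom : ∀ l ∈ ball (0:ℂ) R, z + l • (w - z) ∈ ball z₀ (2 * r) := by
    intro l hl
    rw [mem_ball_zero_iff] at hl
    rw [mem_ball]
    have h1 : dist (z + l • (w - z)) z = ‖l‖ * ‖w - z‖ := by
      rw [dist_eq_norm]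
      simp [norm_smul]
    calc dist (z + l • (w - z)) z₀ ≤ dist (z + l • (w - z)) z + dist z z₀ := dist_triangle _ _ _
      _ < R * ‖w - z‖ + r / 2 := by
          have : ‖l‖ * ‖w - z‖ < R * ‖w - z‖ := by
            exact mul_lt_mul_of_pos_right hl hu
          have hzz := mem_ball.mp hz
          rw [h1]; linarith
      _ ≤ 2 * r := by
          rw [hR, div_mul_cancel₀ _ (ne_of_gt hu)]; linarith
  have hdiff : DifferentiableOn ℂ φ (ball (0:ℂ) R) := by
    apply hf.comp
    · exact ((differentiable_const z).add (differentiable_id.smul_const (w - z))).differentiableOn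
    · exact fun l hl => hball (hmapsdom l hl)
  have hmaps : MapsTo φ (ball (0:ℂ) R) (ball (φ 0) (2 * M + 1)) := by
    intro l hl
    rw [mem_ball]
    have h1 : ‖φ l‖ ≤ M := hM _ (hball (hmapsdom l hl))
    have h2 : ‖φ 0‖ ≤ M := hM _ (hball (hmapsdom 0 (mem_ball_self hRpos)))
    calc dist (φ l) (φ 0) ≤ ‖φ l‖ + ‖φ 0‖ := by
          rw [dist_eq_norm]
          simpa using norm_sub_le (φ l) (φ 0)
      _ ≤ 2 * M := by linarith
      _ < 2 * M + 1 := by linarith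
  have h1mem : (1:ℂ) ∈ ball (0:ℂ) R := by
    rw [mem_ball_zero_iff, norm_one, hR]
    rw [lt_div_iff₀ hu, one_mul, ← dist_eq_norm]
    have := mem_ball.mp hz
    have := mem_ball.mp hw
    calc dist w z ≤ dist w z₀ + dist z₀ z := dist_triangle _ _ _
      _ < r := by rw [dist_comm z₀ z]; linarith
  have key := Complex.dist_le_div_mul_dist_of_mapsTo_ball hdiff (hmaps.mono_right ball_subset_closedBall) h1mem
  have e1 : φ 1 = f w := by simp [hφ]
  have e0 : φ 0 = f z := by simp [hφ]
  rw [e1, e0] at key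
  have e2 : dist (1:ℂ) 0 = 1 := by simp
  rw [e2, mul_one, hR, div_div_eq_mul_div] at key
  calc dist (f w) (f z) ≤ (2 * M + 1) * ‖w - z‖ / r := key
    _ = (2 * M + 1) / r * dist w z := by rw [dist_eq_norm]; ring

/-- Slices in the second variable of a locally uniform limit of holomorphic functions are
analytic. -/
lemma slice_analytic_snd {Ω : Set (ℂ × ℂ)} {G : ℕ → ℂ × ℂ → ℂ} {h : ℂ × ℂ → ℂ}
    (hGdiff : ∀ j, DifferentiableOn ℂ (G j) Ω)
    (hconv : TendstoLocallyUniformlyOn G h atTop Ω)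
    (c : ℂ) {U : Set ℂ} (hUo : IsOpen U) (hU : ∀ t ∈ U, ((c, t) : ℂ × ℂ) ∈ Ω) :
    AnalyticOnNhd ℂ (fun t => h (c, t)) U := by
  have hmap : MapsTo (fun t : ℂ => ((c, t) : ℂ × ℂ)) U Ω := hU
  have hcont : ContinuousOn (fun t : ℂ => ((c, t) : ℂ × ℂ)) U :=
    (continuous_const.prodMk continuous_id).continuousOn
  have h1 := hconv.comp _ hmap hcont
  have h2 : ∀ j, DifferentiableOn ℂ ((G j) ∘ (fun t : ℂ => ((c, t) : ℂ × ℂ))) U :=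
    fun j => (hGdiff j).comp
      ((differentiable_const c).prodMk differentiable_id).differentiableOn hmap
  exact (h1.differentiableOn (Eventually.of_forall h2) hUo).analyticOnNhd hUo

/-- Slices in the first variable of a locally uniform limit of holomorphic functions are
analytic. -/
lemma slice_analytic_fst {Ω : Set (ℂ × ℂ)} {G : ℕ → ℂ × ℂ → ℂ} {h : ℂ × ℂ → ℂ}
    (hGdiff : ∀ j, DifferentiableOn ℂ (G j) Ω)
    (hconv : TendstoLocallyUniformlyOn G h atTop Ω)
    (c : ℂ) {U : Set ℂ} (hUo : IsOpen U) (hU : ∀ s ∈ U, ((s, c) : ℂ × ℂ) ∈ Ω) :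
    AnalyticOnNhd ℂ (fun s => h (s, c)) U := by
  have hmap : MapsTo (fun s : ℂ => ((s, c) : ℂ × ℂ)) U Ω := hU
  have hcont : ContinuousOn (fun s : ℂ => ((s, c) : ℂ × ℂ)) U :=
    (continuous_id.prodMk continuous_const).continuousOn
  have h1 := hconv.comp _ hmap hcont
  have h2 : ∀ j, DifferentiableOn ℂ ((G j) ∘ (fun s : ℂ => ((s, c) : ℂ × ℂ))) U :=
    fun j => (hGdiff j).comp
      (differentiable_id.prodMk (differentiable_const c)).differentiableOn hmap
  exact (h1.differentiableOn (Eventually.of_forall h2) hUo).analyticOnNhd hUo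

/-- If a locally uniform limit of holomorphic functions vanishes on a small ball, it vanishes
on any larger concentric ball contained in the domain. -/
lemma vanish_propagate {Ω : Set (ℂ × ℂ)} {G : ℕ → ℂ × ℂ → ℂ} {h : ℂ × ℂ → ℂ}
    (hGdiff : ∀ j, DifferentiableOn ℂ (G j) Ω)
    (hconv : TendstoLocallyUniformlyOn G h atTop Ω)
    {w : ℂ × ℂ} {ρ ε : ℝ} (hε : 0 < ε) (hερ : ε ≤ ρ)
    (hsub : ball w ρ ⊆ Ω) (hvan : ∀ y ∈ ball w ε, h y = 0) :
    ∀ y ∈ ball w ρ, h y = 0 := by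
  have hρ : 0 < ρ := lt_of_lt_of_le hε hερ
  have hmem : ∀ (s t : ℂ), s ∈ ball w.1 ρ → t ∈ ball w.2 ρ → ((s, t) : ℂ × ℂ) ∈ ball w ρ := by
    intro s t hs ht
    rw [mem_ball] at hs ht ⊢
    rw [Prod.dist_eq]
    exact max_lt hs ht
  have step1 : ∀ s ∈ ball w.1 ε, ∀ t ∈ ball w.2 ρ, h (s, t) = 0 := by
    intro s hs
    have hsρ : s ∈ ball w.1 ρ := ball_subset_ball hερ hs
    have hA : AnalyticOnNhd ℂ (fun t => h (s, t)) (ball w.2 ρ) :=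
      slice_analytic_snd hGdiff hconv s isOpen_ball (fun t ht => hsub (hmem s t hsρ ht))
    have hev : (fun t => h (s, t)) =ᶠ[𝓝 w.2] 0 := by
      filter_upwards [ball_mem_nhds w.2 hε] with t ht
      refine hvan (s, t) ?_
      rw [mem_ball, Prod.dist_eq]
      exact max_lt (mem_ball.mp hs) (mem_ball.mp ht)
    exact fun t ht => hA.eqOn_zero_of_preconnected_of_eventuallyEq_zero
      (convex_ball _ _).isPreconnected (mem_ball_self hρ) hev ht
  have step2 : ∀ t ∈ ball w.2 ρ, ∀ s ∈ ball w.1 ρ, h (s, t) = 0 := by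
    intro t ht
    have hA : AnalyticOnNhd ℂ (fun s => h (s, t)) (ball w.1 ρ) :=
      slice_analytic_fst hGdiff hconv t isOpen_ball (fun s hs => hsub (hmem s t hs ht))
    have hev : (fun s => h (s, t)) =ᶠ[𝓝 w.1] 0 := by
      filter_upwards [ball_mem_nhds w.1 hε] with s hs
      exact step1 s hs t ht
    exact fun s hs => hA.eqOn_zero_of_preconnected_of_eventuallyEq_zero
      (convex_ball _ _).isPreconnected (mem_ball_self hρ) hev hs
  intro y hy
  rw [mem_ball, Prod.dist_eq, max_lt_iff] at hy
  have := step2 y.2 (mem_ball.mpr hy.2) y.1 (mem_ball.mpr hy.1)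
  simpa using this

/-- Real points just to the right of `x` accumulate at `x` in `ℂ`: a frequently statement. -/
lemma freq_real {x δ : ℝ} (hδ : 0 < δ) {P : ℂ → Prop}
    (hP : ∀ y : ℝ, y ∈ Ioo x (x + δ) → P ((y : ℝ) : ℂ)) :
    ∃ᶠ z in 𝓝[≠] ((x : ℝ) : ℂ), P z := by
  have hmem : ∀ n : ℕ, x + δ / (n + 2) ∈ Ioo x (x + δ) := by
    intro n
    constructor
    · have : (0:ℝ) < δ / (n + 2) := by positivity
      linarith
    · have h2 : (1:ℝ) < (n:ℝ) + 2 := by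
        have : (0:ℝ) ≤ (n:ℝ) := Nat.cast_nonneg n
        linarith
      have : δ / ((n:ℝ) + 2) < δ := div_lt_self hδ h2
      linarith
  have htend0 : Tendsto (fun n : ℕ => δ / ((n:ℝ) + 2)) atTop (𝓝 0) := by
    have h1 : Tendsto (fun n : ℕ => δ / (n:ℝ)) atTop (𝓝 0) :=
      tendsto_const_div_atTop_nhds_zero_nat δ
    have h2 := h1.comp (tendsto_add_atTop_nat 2)
    have : (fun n : ℕ => δ / ((n:ℝ) + 2)) = (fun n : ℕ => δ / (n:ℝ)) ∘ (fun n => n + 2) := by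
      funext n
      simp [Function.comp]
    rw [this]
    exact h2
  have htendR : Tendsto (fun n : ℕ => x + δ / ((n:ℝ) + 2)) atTop (𝓝 x) := by
    have := Tendsto.add (tendsto_const_nhds : Tendsto (fun _ : ℕ => x) atTop (𝓝 x)) htend0
    simpa using this
  have htendC : Tendsto (fun n : ℕ => (((x + δ / ((n:ℝ) + 2)) : ℝ) : ℂ)) atTop
      (𝓝[≠] ((x : ℝ) : ℂ)) := by
    apply tendsto_nhdsWithin_of_tendsto_nhds_of_eventually_within
    · exact (Complex.continuous_ofReal.tendsto x).comp htendR
    · apply Eventually.of_forall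
      intro n
      simp only [mem_compl_iff, mem_singleton_iff]
      intro hc
      have := Complex.ofReal_injective hc
      have hpos : (0:ℝ) < δ / ((n:ℝ) + 2) := by positivity
      linarith
  exact htendC.frequently ((Eventually.of_forall fun n => hP _ (hmem n)).frequently)

/-- Identity-principle half: any locally uniform limit on `Ω₀` of holomorphic functions
tending to `0` on the totally real piece vanishes identically. -/
lemma limit_zero (Ω₀ : Set (ℂ × ℂ)) (hΩ : IsOpen Ω₀) (hΩc : IsConnected Ω₀)
    (T₀ : Set (ℝ × ℝ)) (hT : IsOpen T₀) (hTne : T₀.Nonempty)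
    (hTsub : ∀ p ∈ T₀, (((p.1 : ℂ), (p.2 : ℂ)) : ℂ × ℂ) ∈ Ω₀)
    (G : ℕ → ℂ × ℂ → ℂ)
    (hGdiff : ∀ j, DifferentiableOn ℂ (G j) Ω₀)
    (hGT : ∀ p ∈ T₀,
      Tendsto (fun j => G j (((p.1 : ℂ), (p.2 : ℂ)) : ℂ × ℂ)) atTop (nhds 0))
    (h : ℂ × ℂ → ℂ) (hconv : TendstoLocallyUniformlyOn G h atTop Ω₀) :
    ∀ z ∈ Ω₀, h z = 0 := by
  classical
  set A : Set (ℂ × ℂ) := {z | ∃ ε > 0, ball z ε ⊆ Ω₀ ∧ ∀ y ∈ ball z ε, h y = 0} with hA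
  have hAopen : IsOpen A := by
    rw [Metric.isOpen_iff]
    rintro z ⟨ε, hε, hsub, hvan⟩
    refine ⟨ε / 2, by linarith, ?_⟩
    intro y hy
    refine ⟨ε / 2, by linarith, ?_, ?_⟩
    · refine Subset.trans (fun u hu => ?_) hsub
      rw [mem_ball] at hu hy ⊢
      calc dist u z ≤ dist u y + dist y z := dist_triangle _ _ _
        _ < ε := by linarith
    · intro u hu
      apply hvan
      rw [mem_ball] at hu hy ⊢
      calc dist u z ≤ dist u y + dist y z := dist_triangle _ _ _
        _ < ε := by linarith
  -- h vanishes at the (complexified) points of T₀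
  have hreal : ∀ q ∈ T₀, h (((q.1 : ℂ), (q.2 : ℂ)) : ℂ × ℂ) = 0 := fun q hq =>
    tendsto_nhds_unique (hconv.tendsto_at (hTsub q hq)) (hGT q hq)
  -- A is nonempty inside Ω₀
  have hne : (Ω₀ ∩ A).Nonempty := by
    obtain ⟨p, hp⟩ := hTne
    obtain ⟨δ₀, hδ₀, hδ₀sub⟩ := Metric.isOpen_iff.mp hT p hp
    set P : ℂ × ℂ := (((p.1 : ℂ), (p.2 : ℂ)) : ℂ × ℂ) with hP
    obtain ⟨r₀, hr₀, hr₀sub⟩ := Metric.isOpen_iff.mp hΩ P (hTsub p hp)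
    set r : ℝ := min (δ₀ / 2) (r₀ / 2) with hrdef
    have hr : 0 < r := lt_min (by linarith) (by linarith)
    have hrr₀ : r < r₀ := lt_of_le_of_lt (min_le_right _ _) (by linarith)
    have hrδ₀ : r < δ₀ := lt_of_le_of_lt (min_le_left _ _) (by linarith)
    have hrsub : ball P r ⊆ Ω₀ := Subset.trans (ball_subset_ball hrr₀.le) hr₀sub
    have hdistC : ∀ a b : ℝ, dist ((a : ℝ) : ℂ) ((b : ℝ) : ℂ) = dist a b := by
      intro a b
      rw [Complex.dist_eq, Real.dist_eq, ← Complex.ofReal_sub, Complex.norm_real, Real.norm_eq_abs]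
    -- step 1 : vanishing on a real-in-first-coordinate slab
    have step1 : ∀ a : ℝ, dist a p.1 < r → ∀ t ∈ ball ((p.2 : ℂ)) r, h ((a : ℂ), t) = 0 := by
      intro a ha
      have hA1 : AnalyticOnNhd ℂ (fun t => h ((a : ℂ), t)) (ball ((p.2 : ℂ)) r) := by
        apply slice_analytic_snd hGdiff hconv _ isOpen_ball
        intro t ht
        apply hrsub
        rw [mem_ball, Prod.dist_eq]
        exact max_lt (by rwa [hdistC]) (mem_ball.mp ht)
      have hfreq : ∃ᶠ z in 𝓝[≠] ((p.2 : ℂ)), (fun t => h ((a : ℂ), t)) z = 0 := by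
        apply freq_real hr
        intro y hy
        have hyT : ((a, y) : ℝ × ℝ) ∈ T₀ := by
          apply hδ₀sub
          rw [mem_ball, Prod.dist_eq]
          apply max_lt (lt_trans ha hrδ₀)
          rw [Real.dist_eq, abs_of_pos (by linarith [hy.1])]
          linarith [hy.2, hy.1]
        exact hreal (a, y) hyT
      exact fun t ht => hA1.eqOn_zero_of_preconnected_of_frequently_eq_zero
        (convex_ball _ _).isPreconnected (mem_ball_self hr) hfreq ht
    -- step 2 : vanishing on the complex polydisc
    have step2 : ∀ t ∈ ball ((p.2 : ℂ)) r, ∀ s ∈ ball ((p.1 : ℂ)) r, h (s, t) = 0 := by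
      intro t ht
      have hA1 : AnalyticOnNhd ℂ (fun s => h (s, t)) (ball ((p.1 : ℂ)) r) := by
        apply slice_analytic_fst hGdiff hconv _ isOpen_ball
        intro s hs
        apply hrsub
        rw [mem_ball, Prod.dist_eq]
        exact max_lt (mem_ball.mp hs) (mem_ball.mp ht)
      have hfreq : ∃ᶠ z in 𝓝[≠] ((p.1 : ℂ)), (fun s => h (s, t)) z = 0 := by
        apply freq_real hr
        intro y hy
        apply step1 y _ t ht
        rw [Real.dist_eq, abs_of_pos (by linarith [hy.1])]
        linarith [hy.2, hy.1]
      exact fun s hs => hA1.eqOn_zero_of_preconnected_of_frequently_eq_zero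
        (convex_ball _ _).isPreconnected (mem_ball_self hr) hfreq hs
    refine ⟨P, hTsub p hp, r, hr, hrsub, ?_⟩
    intro y hy
    rw [mem_ball, Prod.dist_eq, max_lt_iff] at hy
    have := step2 y.2 (mem_ball.mpr hy.2) y.1 (mem_ball.mpr hy.1)
    simpa using this
  -- A absorbs its closure inside Ω₀
  have hclos : closure A ∩ Ω₀ ⊆ A := by
    rintro z ⟨hzc, hzΩ⟩
    obtain ⟨r₀, hr₀, hr₀sub⟩ := Metric.isOpen_iff.mp hΩ z hzΩ
    set r : ℝ := r₀ / 4 with hrdef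
    have hr : 0 < r := by positivity
    obtain ⟨w, hwA, hwz⟩ := Metric.mem_closure_iff.mp hzc r hr
    obtain ⟨ε, hε, hεsub, hεvan⟩ := hwA
    set ε' : ℝ := min ε (2 * r) with hε'def
    have hε' : 0 < ε' := lt_min hε (by linarith)
    have hwball : ball w (2 * r) ⊆ Ω₀ := by
      refine Subset.trans (fun u hu => ?_) hr₀sub
      rw [mem_ball] at hu ⊢
      calc dist u z ≤ dist u w + dist w z := dist_triangle _ _ _
        _ < r₀ := by rw [dist_comm z w] at hwz; linarith
    have hvan2 : ∀ y ∈ ball w (2 * r), h y = 0 := by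
      apply vanish_propagate hGdiff hconv hε' (min_le_right _ _) hwball
      intro y hy
      exact hεvan y (ball_subset_ball (min_le_left _ _) hy)
    refine ⟨r, hr, ?_, ?_⟩
    · exact Subset.trans (ball_subset_ball (by linarith)) hr₀sub
    · intro y hy
      apply hvan2
      rw [mem_ball] at hy ⊢
      calc dist y w ≤ dist y z + dist z w := dist_triangle _ _ _
        _ < 2 * r := by linarith
  have hsubA : Ω₀ ⊆ A := by
    apply hΩc.isPreconnected.subset_of_closure_inter_subset hAopen
    · obtain ⟨x, hx1, hx2⟩ := hne
      exact ⟨x, hx1, hx2⟩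
    · exact hclos
  intro z hz
  obtain ⟨ε, hε, -, hvan⟩ := hsubA hz
  exact hvan z (mem_ball_self hε)

/-- Montel plus identity principle: a uniformly bounded sequence of holomorphic functions
on a connected open `Ω₀ ⊆ ℂ²` tending to `0` pointwise on a totally real open piece
`T₀ ⊆ ℝ²` embedded in `Ω₀` has a subsequence converging locally uniformly to `0`, and
every locally uniform subsequential limit is identically zero on `Ω₀`. -/
theorem montel_identity (Ω₀ : Set (ℂ × ℂ)) (hΩ : IsOpen Ω₀) (hΩc : IsConnected Ω₀)
    (T₀ : Set (ℝ × ℝ)) (hT : IsOpen T₀) (hTne : T₀.Nonempty)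
    (hTsub : ∀ p ∈ T₀, (((p.1 : ℂ), (p.2 : ℂ)) : ℂ × ℂ) ∈ Ω₀)
    (g : ℕ → ℂ × ℂ → ℂ) (M : ℝ)
    (hgdiff : ∀ j, DifferentiableOn ℂ (g j) Ω₀)
    (hgbd : ∀ j, ∀ z ∈ Ω₀, ‖g j z‖ ≤ M)
    (hT0 : ∀ p ∈ T₀,
      Tendsto (fun j => g j (((p.1 : ℂ), (p.2 : ℂ)) : ℂ × ℂ)) atTop (nhds 0)) :
    (∃ σ : ℕ → ℕ, StrictMono σ ∧
      TendstoLocallyUniformlyOn (fun n => g (σ n)) (fun _ => 0) atTop Ω₀) ∧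
    (∀ (h : ℂ × ℂ → ℂ) (σ : ℕ → ℕ), StrictMono σ →
      TendstoLocallyUniformlyOn (fun n => g (σ n)) h atTop Ω₀ →
      ∀ z ∈ Ω₀, h z = 0) := by
  classical
  have part2 : ∀ (h : ℂ × ℂ → ℂ) (σ : ℕ → ℕ), StrictMono σ →
      TendstoLocallyUniformlyOn (fun n => g (σ n)) h atTop Ω₀ →
      ∀ z ∈ Ω₀, h z = 0 := by
    intro h σ hσ hconv
    apply limit_zero Ω₀ hΩ hΩc T₀ hT hTne hTsub (fun n => g (σ n))
      (fun n => hgdiff (σ n)) _ h hconv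
    intro p hp
    exact (hT0 p hp).comp hσ.tendsto_atTop
  refine ⟨?_, part2⟩
  -- equicontinuity of the family
  have hequi : ∀ x ∈ Ω₀, EquicontinuousAt g x := by
    intro x hx
    rw [Metric.equicontinuousAt_iff]
    intro ε hε
    obtain ⟨s, hs, hssub⟩ := Metric.isOpen_iff.mp hΩ x hx
    set r : ℝ := s / 2 with hrdef
    have hr : 0 < r := by positivity
    have hball : ball x (2 * r) ⊆ Ω₀ := by
      have h2 : (2:ℝ) * r = s := by rw [hrdef]; ring
      rw [h2]; exact hssub
    have hM0 : 0 ≤ M := le_trans (norm_nonneg _) (hgbd 0 x hx)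
    set C : ℝ := (2 * M + 1) / r with hC
    have hCpos : 0 < C := by positivity
    refine ⟨min (r / 2) (ε / (2 * C)), lt_min (by linarith) (by positivity), ?_⟩
    intro y hy i
    have hyx : y ∈ ball x (r / 2) := mem_ball.mpr (lt_of_lt_of_le hy (min_le_left _ _))
    have hlip := holo_lipschitz (hgdiff i) (hgbd i) hr hball
      (mem_ball_self (by linarith : (0:ℝ) < r / 2)) hyx
    rw [dist_comm]
    have hy2 : dist y x < ε / (2 * C) := lt_of_lt_of_le hy (min_le_right _ _)
    calc dist (g i y) (g i x) ≤ C * dist y x := hlip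
      _ < C * (ε / (2 * C)) := by exact mul_lt_mul_of_pos_left hy2 hCpos
      _ < ε := by
          rw [show C * (ε / (2 * C)) = ε / 2 by field_simp]
          linarith
  -- countable dense subset of Ω₀
  obtain ⟨D₀, hD₀c, hD₀d⟩ := TopologicalSpace.exists_countable_dense ↥Ω₀
  set D : Set (ℂ × ℂ) := Subtype.val '' D₀ with hD
  have hDc : D.Countable := hD₀c.image _
  have hDΩ : D ⊆ Ω₀ := by rintro _ ⟨x, -, rfl⟩; exact x.2
  have hDdense : ∀ z ∈ Ω₀, ∀ δ > 0, ∃ d ∈ D, dist z d < δ := by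
    intro z hz δ hδ
    have h1 : (⟨z, hz⟩ : ↥Ω₀) ∈ closure D₀ := hD₀d _
    obtain ⟨d₀, hd₀, hdist⟩ := Metric.mem_closure_iff.mp h1 δ hδ
    exact ⟨d₀.val, mem_image_of_mem _ hd₀, by rwa [Subtype.dist_eq] at hdist⟩
  -- extraction of a pointwise convergent subsequence on D
  haveI := hDc.to_subtype
  set M' : ℝ := max M 0 with hM'
  have hbd' : ∀ j (d : ↥D), g j d.val ∈ closedBall (0:ℂ) M' := by
    intro j d
    rw [mem_closedBall, dist_zero_right]
    exact le_trans (hgbd j d.val (hDΩ d.2)) (le_max_left _ _)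
  obtain ⟨L, -, σ, hσ, hσconv⟩ :=
    (isCompact_univ_pi (fun _ : ↥D => isCompact_closedBall (0:ℂ) M')).tendsto_subseq
      (x := fun j (d : ↥D) => g j d.val) (fun j d _ => hbd' j d)
  rw [tendsto_pi_nhds] at hσconv
  -- the subsequence is pointwise Cauchy on all of Ω₀
  have hCauchy : ∀ z ∈ Ω₀, CauchySeq (fun n => g (σ n) z) := by
    intro z hz
    rw [Metric.cauchySeq_iff]
    intro ε hε
    obtain ⟨s, hs, hssub⟩ := Metric.isOpen_iff.mp hΩ z hz
    set r : ℝ := s / 2 with hrdef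
    have hr : 0 < r := by positivity
    have hball : ball z (2 * r) ⊆ Ω₀ := by
      have h2 : (2:ℝ) * r = s := by rw [hrdef]; ring
      rw [h2]; exact hssub
    have hM0 : 0 ≤ M := le_trans (norm_nonneg _) (hgbd 0 z hz)
    set C : ℝ := (2 * M + 1) / r with hC
    have hCpos : 0 < C := by positivity
    obtain ⟨d, hdD, hdz⟩ := hDdense z hz (min (r / 2) (ε / 4 / C))
      (lt_min (by linarith) (by positivity))
    have hdball : d ∈ ball z (r / 2) := by
      rw [mem_ball, dist_comm]
      exact lt_of_lt_of_le hdz (min_le_left _ _)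
    have hlip : ∀ i, dist (g i z) (g i d) ≤ C * dist z d := by
      intro i
      have h0 := holo_lipschitz (hgdiff i) (hgbd i) hr hball hdball
        (mem_ball_self (by linarith : (0:ℝ) < r / 2))
      rw [hC]
      exact h0
    have hsmall : ∀ i, dist (g i z) (g i d) < ε / 4 := by
      intro i
      have h1 : dist z d < ε / 4 / C := lt_of_lt_of_le hdz (min_le_right _ _)
      calc dist (g i z) (g i d) ≤ C * dist z d := hlip i
        _ < C * (ε / 4 / C) := mul_lt_mul_of_pos_left h1 hCpos
        _ = ε / 4 := by field_simp
    have hcd : Tendsto (fun n => g (σ n) d) atTop (𝓝 (L ⟨d, hdD⟩)) := hσconv ⟨d, hdD⟩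
    obtain ⟨N, hN⟩ := Metric.cauchySeq_iff.mp hcd.cauchySeq (ε / 4) (by positivity)
    refine ⟨N, ?_⟩
    intro m hm n hn
    calc dist (g (σ m) z) (g (σ n) z)
        ≤ dist (g (σ m) z) (g (σ m) d) + dist (g (σ m) d) (g (σ n) d)
          + dist (g (σ n) d) (g (σ n) z) := dist_triangle4 _ _ _ _
      _ < ε / 4 + ε / 4 + ε / 4 := by
          have h3 : dist (g (σ n) d) (g (σ n) z) < ε / 4 := by
            rw [dist_comm]; exact hsmall (σ n)
          have h2 := hN m hm n hn
          have h1 := hsmall (σ m)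
          linarith
      _ < ε := by linarith
  -- pointwise limit function
  set h : ℂ × ℂ → ℂ := fun z => limUnder atTop (fun n => g (σ n) z) with hh
  have hptwise : ∀ z ∈ Ω₀, Tendsto (fun n => g (σ n) z) atTop (𝓝 (h z)) := by
    intro z hz
    obtain ⟨l, hl⟩ := cauchySeq_tendsto_of_complete (hCauchy z hz)
    have : h z = l := hl.limUnder_eq
    rw [this]; exact hl
  -- uniform convergence on compact subsets via Ascoli
  have hK : ∀ K ⊆ Ω₀, IsCompact K → TendstoUniformlyOn (fun n => g (σ n)) h atTop K := by
    intro K hKΩ hKc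
    haveI : CompactSpace ↥K := isCompact_iff_compactSpace.mp hKc
    have hEK : Equicontinuous (K.restrict ∘ (fun n => g (σ n))) := by
      refine (equicontinuous_restrict_iff _).mpr ?_
      intro x hx
      have h1 : EquicontinuousAt (fun n => g (σ n)) x := by
        intro U hU
        filter_upwards [hequi x (hKΩ hx) U hU] with y hy n
        exact hy (σ n)
      exact h1.equicontinuousWithinAt K
    rw [tendstoUniformlyOn_iff_tendstoUniformly_comp_coe]
    have hpt : Tendsto (K.restrict ∘ (fun n => g (σ n))) atTop (𝓝 (K.restrict h)) := by
      rw [tendsto_pi_nhds]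
      intro x
      exact hptwise x.val (hKΩ x.2)
    have := (hEK.tendsto_uniformFun_iff_pi atTop (K.restrict h)).mpr hpt
    exact UniformFun.tendsto_iff_tendstoUniformly.mp this
  have hTLU : TendstoLocallyUniformlyOn (fun n => g (σ n)) h atTop Ω₀ :=
    (tendstoLocallyUniformlyOn_iff_forall_isCompact hΩ).mpr hK
  have hzero := part2 h σ hσ hTLU
  exact ⟨σ, hσ, hTLU.congr_right (fun z hz => hzero z hz)⟩
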